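/- The 7-vertex graph consisting of a triangle {1,2,3}, a vertex 4, and paths 1-5-4, 2-6-4, 3-7-4 (i.e., edges 12, 13, 23, 15, 54, 26, 64, 37, 74) is not complementary vanishing. -/

import Mathlib

/-!
Vertices are numbered from 0: the triangle is `0, 1, 2`, the hub is `3`, and `4, 5, 6` are the
midpoints of the paths from `0, 1, 2` to the hub. Suppose `A * B = 0` with `A ∈ S(G)` and
`B ∈ S(Gᶜ)`. A diagonal entry of `A * B` is just `a_ii * b_ii`. For a triangle vertex `i` with
path midpoint `p`, the entry `(A * B) p i = a_pi * b_ii + a_p3 * b_3i` forces `b_ii ≠ 0`, hence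
`a_ii = 0`. With the triangle's diagonal gone, the entries `(A * B) i 3` for `i = 0, 1, 2` put the
nonzero vector `(b_03, b_13, b_23)` in the kernel of the weighted triangle matrix with zero
diagonal, whose determinant `2 a_01 a_02 a_12` does not vanish because the cycle is odd.
-/

/-- `A ∈ S(G)`: real symmetric matrix whose off-diagonal nonzero pattern is `E(G)`. -/
def MatIn {V : Type*} [Fintype V] (G : SimpleGraph V) (A : Matrix V V ℝ) : Prop :=
  A.IsSymm ∧ ∀ i j : V, i ≠ j → (A i j ≠ 0 ↔ G.Adj i j)

/-- `G` is complementary vanishing. -/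
def CompVan {V : Type*} [Fintype V] (G : SimpleGraph V) : Prop :=
  ∃ A B : Matrix V V ℝ, MatIn G A ∧ MatIn Gᶜ B ∧ A * B = 0

theorem eq_zero_of_triangle_kernel {a b c x y z : ℝ} (hb : b ≠ 0) (hc : c ≠ 0)
    (hx : a * y + b * z = 0) (hy : a * x + c * z = 0) (hz : b * x + c * y = 0) : z = 0 := by
  have : 2 * b * c * z = 0 := by linear_combination b * hy + c * hx - a * hz
  simpa [hb, hc] using this

namespace MatIn

variable {V : Type*} [Fintype V] {G : SimpleGraph V} {A B : Matrix V V ℝ} {i j : V}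

theorem apply_eq_zero (hA : MatIn G A) (hij : i ≠ j) (hG : ¬G.Adj i j) : A i j = 0 :=
  not_not.mp fun h => hG ((hA.2 i j hij).mp h)

theorem apply_ne_zero (hA : MatIn G A) (hG : G.Adj i j) : A i j ≠ 0 :=
  (hA.2 i j hG.ne).mpr hG

theorem compl_apply_eq_zero (hB : MatIn Gᶜ B) (hG : G.Adj i j) : B i j = 0 :=
  hB.apply_eq_zero hG.ne fun h => h.2 hG

theorem compl_apply_ne_zero (hB : MatIn Gᶜ B) (hij : i ≠ j) (hG : ¬G.Adj i j) : B i j ≠ 0 :=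
  hB.apply_ne_zero ⟨hij, hG⟩

variable (hA : MatIn G A) (hB : MatIn Gᶜ B) (hAB : A * B = 0)
include hA hB hAB

/-- The off-diagonal terms of `(A * B) i i` pair an edge of `G` with an edge of `Gᶜ`. -/
theorem apply_self_mul_apply_self_eq_zero (i : V) : A i i * B i i = 0 := by
  rw [← Matrix.zero_apply (α := ℝ) i i, ← hAB, Matrix.mul_apply, Fintype.sum_eq_single i]
  intro k hki
  by_cases hik : G.Adj i k
  · rw [hB.compl_apply_eq_zero hik.symm, mul_zero]
  · rw [hA.apply_eq_zero hki.symm hik, zero_mul]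

theorem apply_self_eq_zero_of_unique_neighbor {p k : V} (hpj : G.Adj p j)
    (hk : ∀ l, G.Adj p l ∧ l ≠ j ∧ ¬G.Adj l j ↔ l = k) : A j j = 0 := by
  obtain ⟨hpk, hkj, hkj'⟩ := (hk k).mpr rfl
  have hBjj : B j j ≠ 0 := by
    intro hBjj
    have hpj_entry : (A * B) p j = A p j * B j j + A p k * B k j := by
      rw [Matrix.mul_apply, Fintype.sum_eq_add j k hkj.symm]
      rintro l ⟨hlj, hlk⟩
      by_cases hpl : G.Adj p l
      · by_cases hlj' : G.Adj l j
        · rw [hB.compl_apply_eq_zero hlj', mul_zero]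
        · exact absurd ((hk l).mp ⟨hpl, hlj, hlj'⟩) hlk
      · by_cases hlp : l = p
        · rw [hlp, hB.compl_apply_eq_zero hpj, mul_zero]
        · rw [hA.apply_eq_zero (Ne.symm hlp) hpl, zero_mul]
    rw [hAB, Matrix.zero_apply, hBjj, mul_zero, zero_add] at hpj_entry
    exact mul_ne_zero (hA.apply_ne_zero hpk) (hB.compl_apply_ne_zero hkj hkj') hpj_entry.symm
  exact (mul_eq_zero.mp (apply_self_mul_apply_self_eq_zero hA hB hAB j)).resolve_right hBjj

theorem mul_apply_add_mul_apply_eq_zero {x y z h : V} (hxx : A x x = 0) (hyz : y ≠ z)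
    (hx : ∀ m, G.Adj x m → m = y ∨ m = z ∨ G.Adj m h) :
    A x y * B y h + A x z * B z h = 0 := by
  rw [← Fintype.sum_eq_add (f := fun m => A x m * B m h) y z hyz, ← Matrix.mul_apply, hAB,
    Matrix.zero_apply]
  rintro m ⟨hmy, hmz⟩
  by_cases hxm : G.Adj x m
  · rcases hx m hxm with rfl | rfl | hmh
    · exact absurd rfl hmy
    · exact absurd rfl hmz
    · rw [hB.compl_apply_eq_zero hmh, mul_zero]
  · by_cases hmx : m = x
    · rw [hmx, hxx, zero_mul]
    · rw [hA.apply_eq_zero (Ne.symm hmx) hxm, zero_mul]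

theorem compl_apply_eq_zero_of_triangle {x y z h : V} (hxy : G.Adj x y) (hxz : G.Adj x z)
    (hyz : G.Adj y z) (hxx : A x x = 0) (hyy : A y y = 0) (hzz : A z z = 0)
    (hx : ∀ m, G.Adj x m → m = y ∨ m = z ∨ G.Adj m h)
    (hy : ∀ m, G.Adj y m → m = x ∨ m = z ∨ G.Adj m h)
    (hz : ∀ m, G.Adj z m → m = x ∨ m = y ∨ G.Adj m h) : B z h = 0 := by
  have ex := mul_apply_add_mul_apply_eq_zero hA hB hAB hxx hyz.ne hx
  have ey := mul_apply_add_mul_apply_eq_zero hA hB hAB hyy hxz.ne hy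
  have ez := mul_apply_add_mul_apply_eq_zero hA hB hAB hzz hxy.ne hz
  rw [hA.1.apply x y] at ey
  rw [hA.1.apply x z, hA.1.apply y z] at ez
  exact eq_zero_of_triangle_kernel (hA.apply_ne_zero hxz) (hA.apply_ne_zero hyz) ex ey ez

end MatIn

theorem stmt_19 :
    ¬ CompVan (SimpleGraph.fromEdgeSet
      {s(0, 1), s(0, 2), s(1, 2), s(0, 4), s(4, 3), s(1, 5), s(5, 3), s(2, 6), s(6, 3)}
      : SimpleGraph (Fin 7)) := by
  rintro ⟨A, B, hA, hB, hAB⟩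
  have h0 : A 0 0 = 0 :=
    hA.apply_self_eq_zero_of_unique_neighbor hB hAB (p := 4) (k := 3) (by decide) (by decide)
  have h1 : A 1 1 = 0 :=
    hA.apply_self_eq_zero_of_unique_neighbor hB hAB (p := 5) (k := 3) (by decide) (by decide)
  have h2 : A 2 2 = 0 :=
    hA.apply_self_eq_zero_of_unique_neighbor hB hAB (p := 6) (k := 3) (by decide) (by decide)
  refine hB.compl_apply_ne_zero (i := 2) (j := 3) (by decide) (by decide) ?_
  exact hA.compl_apply_eq_zero_of_triangle hB hAB (by decide) (by decide) (by decide) h0 h1 h2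
    (by decide) (by decide) (by decide)
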